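/- Let $n, k, j$ be non-negative integers satisfying $2k \leq n$ and $j < k$. Then $\sum_{i=1}^{k-j} (-1)^{i-1}\,\binom{n-2k+i}{i-1}\,\binom{n-2j+1}{k-i-j} = \binom{2k-2j-1}{k-j}$, where the sum is computed in the integers. -/

import Mathlib

/-! Since `(-1)^t * C(a+t, t) = C(-(a+1), t)`, the alternating sum is the Chu–Vandermonde
convolution of the upper indices `-(a+1)` and `b`, hence equals `C(b-a-1, s)`. With
`a = n-2k+1`, `b = n-2j+1` and `s = k-j-1` this is `C(2(k-j)-1, k-j-1)`, which is the
right-hand side by symmetry. -/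

open Finset

theorem Ring.choose_neg_natCast_add_one (a t : ℕ) :
    Ring.choose (-((a : ℤ) + 1)) t = (-1) ^ t * (a + t).choose t := by
  rw [Ring.choose_neg, Int.negOnePow_def, Units.smul_def, zsmul_eq_mul, Int.cast_id,
    show (a : ℤ) + 1 + t - 1 = ((a + t : ℕ) : ℤ) by push_cast; ring, Ring.choose_natCast]
  simp only [zpow_natCast, Units.val_pow_eq_pow_val, Units.val_neg, Units.val_one]

theorem sum_range_neg_one_pow_mul_add_choose_mul_choose (a b s : ℕ) :
    ∑ t ∈ range (s + 1), (-1 : ℤ) ^ t * (a + t).choose t * b.choose (s - t) =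
      Ring.choose ((b : ℤ) - (a + 1)) s := by
  rw [sub_eq_neg_add, Ring.add_choose_eq s (Commute.all _ _),
    ← Nat.sum_antidiagonal_eq_sum_range_succ
      (fun t u => (-1 : ℤ) ^ t * (a + t).choose t * b.choose u)]
  refine sum_congr rfl fun p _ => ?_
  rw [Ring.choose_neg_natCast_add_one, Ring.choose_natCast]

theorem sum_range_neg_one_pow_mul_add_choose_mul_choose_of_lt {a b : ℕ} (h : a < b) (s : ℕ) :
    ∑ t ∈ range (s + 1), (-1 : ℤ) ^ t * (a + t).choose t * b.choose (s - t) =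
      (b - (a + 1)).choose s := by
  rw [sum_range_neg_one_pow_mul_add_choose_mul_choose, ← Ring.choose_natCast, Nat.cast_sub h,
    Nat.cast_add_one]

theorem stmt_3 (n k j : ℕ) (h2k : 2 * k ≤ n) (hjk : j < k) :
    (∑ i ∈ Finset.Icc 1 (k - j),
      (-1 : ℤ) ^ (i - 1) * (Nat.choose (n - 2 * k + i) (i - 1)) *
        (Nat.choose (n - 2 * j + 1) (k - i - j)))
      = Nat.choose (2 * k - 2 * j - 1) (k - j) := by
  obtain ⟨s, hs⟩ : ∃ s, k - j = s + 1 := ⟨k - j - 1, by omega⟩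
  have hsum := sum_range_neg_one_pow_mul_add_choose_mul_choose_of_lt
    (show n - 2 * k + 1 < n - 2 * j + 1 by omega) s
  rw [show n - 2 * j + 1 - (n - 2 * k + 1 + 1) = 2 * s + 1 by omega] at hsum
  rw [hs, show 2 * k - 2 * j - 1 = 2 * s + 1 by omega, Nat.choose_symm_half, ← hsum,
    ← Ico_add_one_right_eq_Icc, sum_Ico_eq_sum_range, Nat.add_sub_cancel]
  refine sum_congr rfl fun t _ => ?_
  rw [show n - 2 * k + (1 + t) = n - 2 * k + 1 + t by omega,
    show k - (1 + t) - j = s - t by omega, Nat.add_sub_cancel_left]
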